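/- Let Σ₂ = {a, b} with a < b of the same parity, and let w be a two-times differentiable infinite word over Σ₂ whose second derivative's run base alternates between a and b. Then the factor set of w is not closed under complementation (the permutation exchanging a and b): there is a factor f of w such that the word obtained from f by exchanging a and b is not a factor of w. -/

import Mathlib

/-- Partial sums of a sequence of run lengths. -/
def partialSum (t : ℕ → ℕ) : ℕ → ℕ
  | 0 => 0
  | k + 1 => partialSum t k + t k

/-- `w` decomposes into maximal runs with base sequence `α` and run-length
sequence `t`. -/
def IsRunDecomp (w α t : ℕ → ℕ) : Prop :=
  (∀ k, 1 ≤ t k) ∧ (∀ k, α k ≠ α (k + 1)) ∧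
    ∀ k i, partialSum t k ≤ i → i < partialSum t (k + 1) → w i = α k

/-- `t` is the run-length sequence Δ(w) of the infinite word `w`. -/
def IsDelta (w t : ℕ → ℕ) : Prop := ∃ α, IsRunDecomp w α t

/-- The finite word `f` occurs in `w` at position `p`. -/
def factorAt (w : ℕ → ℕ) (p : ℕ) (f : List ℕ) : Prop :=
  (List.range f.length).map (fun j => w (p + j)) = f


/-!
Write `β` for the letters of the runs of `w` and `α` for those of the runs of `d1 = Δ w`. Every run
of `d1` has length `a` or `b`, which have the same parity, so the `j`-th run of `d1` starts at a
position `≡ j * a (mod 2)`. As `α` and `β` alternate, the letter of the run of `w` with that index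
is determined by the value of `d1` there.

Let run `k + 2` of `w` be where the third run of `d1` starts: runs `k + 1` and `k + 2` of `w` have
distinct lengths `p = α 1` and `r = α 2`, and with `x = β k`, `y = β (k + 1)` the word `x yᵖ xʳ y`
is a factor of `w`. An occurrence of its complement `y xᵖ yʳ x` would give consecutive runs `xᵖ yʳ`
of `w`; as `p ≠ r`, the second one starts a run of `d1` with value `r`, so by the above its letter
is `β (k + 2) = x`, not `y`.
-/

open List

lemma partialSum_succ (t : ℕ → ℕ) (k : ℕ) : partialSum t (k + 1) = partialSum t k + t k := rfl

lemma partialSum_mod_two {t : ℕ → ℕ} {c : ℕ} (ht : ∀ k, t k % 2 = c % 2) (j : ℕ) :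
    partialSum t j % 2 = j * c % 2 := by
  induction j with
  | zero => simp [partialSum]
  | succ j ih => rw [partialSum_succ, Nat.add_mod, ih, ht, ← Nat.add_mod, Nat.succ_mul]

lemma partialSum_strictMono {t : ℕ → ℕ} (ht : ∀ k, 1 ≤ t k) : StrictMono (partialSum t) :=
  strictMono_nat_of_lt_succ fun k => Nat.lt_add_of_pos_right (ht k)

lemma exists_partialSum_le_lt {t : ℕ → ℕ} (ht : ∀ k, 1 ≤ t k) (i : ℕ) :
    ∃ k, partialSum t k ≤ i ∧ i < partialSum t (k + 1) := by
  induction i with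
  | zero => exact ⟨0, le_rfl, by rw [partialSum_succ]; have := ht 0; omega⟩
  | succ i ih =>
    obtain ⟨k, hk₁, hk₂⟩ := ih
    by_cases hi : i + 1 < partialSum t (k + 1)
    · exact ⟨k, by omega, hi⟩
    · exact ⟨k + 1, by omega, by rw [partialSum_succ]; have := ht (k + 1); omega⟩

section Alternating

variable {X : Type*} {x₀ x₁ : X} {β : ℕ → X}

lemma apply_add_two_of_alternating (hv : ∀ k, β k = x₀ ∨ β k = x₁)
    (hβ : ∀ k, β k ≠ β (k + 1)) (k : ℕ) : β (k + 2) = β k := by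
  have h₁ := hβ k
  have h₂ := hβ (k + 1)
  rcases hv k with h | h <;> rcases hv (k + 1) with h' | h' <;> rcases hv (k + 2) with h'' | h'' <;>
    simp_all

lemma apply_eq_apply_iff_of_alternating (hv : ∀ k, β k = x₀ ∨ β k = x₁)
    (hβ : ∀ k, β k ≠ β (k + 1)) {k k' : ℕ} : β k = β k' ↔ k % 2 = k' % 2 := by
  have hmod : ∀ k, β k = β (k % 2) := by
    intro k
    induction k using Nat.strong_induction_on with
    | _ k ih =>
      match k with
      | 0 | 1 => rfl
      | k + 2 => rw [apply_add_two_of_alternating hv hβ, ih k (by omega), Nat.add_mod_right]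
  rw [hmod k, hmod k']
  rcases Nat.mod_two_eq_zero_or_one k with h | h <;>
    rcases Nat.mod_two_eq_zero_or_one k' with h' | h' <;> simp [h, h', hβ 0, (hβ 0).symm]

end Alternating

section Factor

variable {w : ℕ → ℕ} {q : ℕ}

lemma factorAt_cons {x : ℕ} {f : List ℕ} :
    factorAt w q (x :: f) ↔ w q = x ∧ factorAt w (q + 1) f := by
  simp only [factorAt, length_cons, range_succ_eq_map, map_cons, map_map, cons.injEq, add_zero,
    Function.comp_def, Nat.succ_eq_add_one, add_assoc, add_comm 1]

lemma factorAt_nil : factorAt w q [] := rfl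

lemma factorAt_append {f g : List ℕ} :
    factorAt w q (f ++ g) ↔ factorAt w q f ∧ factorAt w (q + f.length) g := by
  simp only [factorAt, length_append, range_add, map_append, map_map, Function.comp_def, add_assoc]
  exact ⟨fun h => append_inj h (by simp), fun h => by rw [h.1, h.2]⟩

lemma factorAt_replicate {n x : ℕ} :
    factorAt w q (replicate n x) ↔ ∀ j < n, w (q + j) = x := by
  simp [factorAt, eq_replicate_iff]

end Factor

namespace IsRunDecomp

variable {w α t : ℕ → ℕ}

lemma apply_eq (h : IsRunDecomp w α t) {k i : ℕ} (hk : partialSum t k ≤ i)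
    (hi : i < partialSum t k + t k) : w i = α k :=
  h.2.2 k i hk hi

lemma length_pos (h : IsRunDecomp w α t) (k : ℕ) : 0 < t k := h.1 k

lemma base_ne (h : IsRunDecomp w α t) (k : ℕ) : α k ≠ α (k + 1) := h.2.1 k

lemma apply_partialSum (h : IsRunDecomp w α t) (k : ℕ) : w (partialSum t k) = α k :=
  h.apply_eq le_rfl (Nat.lt_add_of_pos_right (h.length_pos k))

lemma base_of_forall (h : IsRunDecomp w α t) {P : ℕ → Prop} (hw : ∀ i, P (w i)) (k : ℕ) :
    P (α k) :=
  h.apply_partialSum k ▸ hw _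

lemma exists_partialSum_eq_of_ne (h : IsRunDecomp w α t) {i : ℕ} (hi : w i ≠ w (i + 1)) :
    ∃ k, partialSum t k = i + 1 := by
  obtain ⟨k, hk₁, hk₂⟩ := exists_partialSum_le_lt h.1 i
  refine ⟨k + 1, ?_⟩
  by_contra hne
  have hk₃ : i + 1 < partialSum t (k + 1) := by omega
  exact hi ((h.apply_eq hk₁ hk₂).trans (h.apply_eq (by omega) hk₃).symm)

lemma length_eq (h : IsRunDecomp w α t) {k s p : ℕ} (hs : partialSum t k = s)
    (hconst : ∀ j < p, w (s + j) = w s) (hend : w (s + p) ≠ w s) : t k = p := by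
  have hstart : w s = α k := hs ▸ h.apply_partialSum k
  rcases lt_trichotomy (t k) p with hlt | heq | hgt
  · have hnext := h.apply_partialSum (k + 1)
    rw [partialSum_succ, hs, hconst _ hlt, hstart] at hnext
    exact absurd hnext (h.base_ne k)
  · exact heq
  · exact absurd ((h.apply_eq (by omega) (by omega)).trans hstart.symm) hend

lemma factorAt_runs (h : IsRunDecomp w α t) (k : ℕ) :
    factorAt w (partialSum t (k + 1) - 1) (α k :: replicate (t (k + 1)) (α (k + 1)) ++
      replicate (t (k + 2)) (α (k + 2)) ++ [α (k + 3)]) := by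
  simp only [factorAt_append, factorAt_cons, factorAt_replicate, factorAt_nil, length_cons,
    length_append, length_replicate, and_true]
  have := h.length_pos k
  have := h.length_pos (k + 3)
  have hk₁ := partialSum_succ t k
  have hk₂ : partialSum t (k + 2) = _ := partialSum_succ t (k + 1)
  have hk₃ : partialSum t (k + 3) = _ := partialSum_succ t (k + 2)
  refine ⟨⟨⟨h.apply_eq (by omega) (by omega), fun j hj => h.apply_eq (by omega) (by omega)⟩,
    fun j hj => h.apply_eq (by omega) (by omega)⟩, h.apply_eq (by omega) (by omega)⟩

lemma exists_runs_of_factorAt (h : IsRunDecomp w α t) {q x y p r : ℕ} (hxy : x ≠ y)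
    (hp : 1 ≤ p) (hr : 1 ≤ r) (hf : factorAt w q (x :: replicate p y ++ replicate r x ++ [y])) :
    ∃ n, t n = p ∧ t (n + 1) = r ∧ α (n + 1) = x := by
  simp only [factorAt_append, factorAt_cons, factorAt_replicate, factorAt_nil, length_cons,
    length_append, length_replicate, and_true] at hf
  obtain ⟨⟨⟨hx, hys⟩, hxs⟩, hy⟩ := hf
  have hy₀ : w (q + 1) = y := hys 0 hp
  have hx₀ : w (q + (p + 1)) = x := hxs 0 hr
  obtain ⟨n, hn⟩ := h.exists_partialSum_eq_of_ne (i := q) (by rw [hx, hy₀]; exact hxy)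
  have hlen : t n = p := h.length_eq hn (fun j hj => (hys j hj).trans hy₀.symm)
    (by rw [add_assoc, add_comm 1, hx₀, hy₀]; exact hxy)
  have hn₁ : partialSum t (n + 1) = q + (p + 1) := by rw [partialSum_succ, hn, hlen]; ring
  have hlen₁ : t (n + 1) = r := h.length_eq hn₁ (fun j hj => (hxs j hj).trans hx₀.symm)
    (by rw [add_assoc, hy, hx₀]; exact hxy.symm)
  refine ⟨n, hlen, hlen₁, ?_⟩
  rw [← h.apply_partialSum, hn₁, hx₀]

lemma partialSum_mod_two_eq_of_apply_eq (h : IsRunDecomp w α t) {a b c : ℕ}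
    (hα : ∀ j, α j = a ∨ α j = b) (ht : ∀ j, t j % 2 = c % 2) {j j' : ℕ}
    (hjj' : w (partialSum t j) = w (partialSum t j')) :
    partialSum t j % 2 = partialSum t j' % 2 := by
  rw [h.apply_partialSum, h.apply_partialSum,
    apply_eq_apply_iff_of_alternating hα h.base_ne] at hjj'
  rw [partialSum_mod_two ht, partialSum_mod_two ht]
  exact Nat.ModEq.mul_right c hjj'

end IsRunDecomp

theorem stmt17_general (a b : ℕ) (hlt : a < b) (hpar : a % 2 = b % 2)
    (w d1 d2 : ℕ → ℕ) (hw : ∀ i, w i = a ∨ w i = b)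
    (h1 : IsDelta w d1) (hd1 : ∀ i, d1 i = a ∨ d1 i = b)
    (h2 : IsDelta d1 d2) (hd2 : ∀ i, d2 i = a ∨ d2 i = b) :
    ∃ f : List ℕ, (∃ p, factorAt w p f) ∧
      ¬ ∃ p, factorAt w p (f.map fun x => if x = a then b else a) := by
  obtain ⟨β, hβ⟩ := h1
  obtain ⟨α, hα⟩ := h2
  have hβv : ∀ k, β k = a ∨ β k = b := hβ.base_of_forall (P := fun x => x = a ∨ x = b) hw
  have hβ₂ := apply_add_two_of_alternating hβv hβ.base_ne
  have hswap : ∀ {x y}, (x = a ∨ x = b) → (y = a ∨ y = b) → x ≠ y →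
      (if x = a then b else a) = y := by
    rintro x y (rfl | rfl) (rfl | rfl) hxy <;> simp_all [hlt.ne]
  obtain ⟨k, hk⟩ : ∃ k, partialSum d2 2 = k + 2 :=
    ⟨_, (Nat.sub_add_cancel ((partialSum_strictMono hα.length_pos).id_le 2)).symm⟩
  have h₁₂ : partialSum d2 1 < partialSum d2 2 := partialSum_strictMono hα.length_pos one_lt_two
  have hp : d1 (k + 1) = α 1 := hα.apply_eq (by omega) (by show k + 1 < partialSum d2 2; omega)
  have hr : d1 (k + 2) = α 2 := hk ▸ hα.apply_partialSum 2
  refine ⟨β k :: replicate (d1 (k + 1)) (β (k + 1)) ++ replicate (d1 (k + 2)) (β k) ++ [β (k + 1)],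
    ⟨partialSum d1 (k + 1) - 1, ?_⟩, ?_⟩
  · simpa only [hβ₂] using hβ.factorAt_runs k
  rintro ⟨q, hq⟩
  simp only [map_cons, map_append, map_replicate, map_nil, hswap (hβv k) (hβv _) (hβ.base_ne k),
    hswap (hβv _) (hβv k) (hβ.base_ne k).symm] at hq
  obtain ⟨n, hn, hn₁, hβn⟩ :=
    hβ.exists_runs_of_factorAt (hβ.base_ne k).symm (hβ.length_pos _) (hβ.length_pos _) hq
  obtain ⟨j, hj⟩ :=
    hα.exists_partialSum_eq_of_ne (i := n) (by rw [hn, hn₁, hp, hr]; exact hα.base_ne 1)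
  have hpar₂ : partialSum d2 j % 2 = partialSum d2 2 % 2 :=
    hα.partialSum_mod_two_eq_of_apply_eq (hα.base_of_forall (P := fun x => x = a ∨ x = b) hd1)
      (c := a) (fun i => by rcases hd2 i with h | h <;> omega) (by rw [hj, hk, hn₁])
  rw [hj, hk, ← apply_eq_apply_iff_of_alternating hβv hβ.base_ne, hβ₂, hβn] at hpar₂
  exact hβ.base_ne k hpar₂.symm

/-- Over `{a, b}` with `a < b` of the same parity, if `w` is a two-times
differentiable infinite word whose second derivative decomposes into runs
(whose bases then necessarily alternate between `a` and `b`), then the factor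
set of `w` is not closed under complementation: some factor `f` of `w` has
complement `f̄` that is not a factor of `w`. -/
theorem stmt17 (a b : ℕ) (hlt : a < b) (hpar : a % 2 = b % 2) (hpos : 0 < a)
    (w d1 d2 : ℕ → ℕ) (hw : ∀ i, w i = a ∨ w i = b)
    (h1 : IsDelta w d1) (hd1 : ∀ i, d1 i = a ∨ d1 i = b)
    (h2 : IsDelta d1 d2) (hd2 : ∀ i, d2 i = a ∨ d2 i = b)
    (halt : ∃ α t, IsRunDecomp d2 α t) :
    ∃ f : List ℕ, (∃ p, factorAt w p f) ∧
      ¬ ∃ p, factorAt w p (f.map fun x => if x = a then b else a) :=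
  stmt17_general a b hlt hpar w d1 d2 hw h1 hd1 h2 hd2
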